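/- arXiv:2404.09646 — 2 statements merged into one kernel-verified Lean document; each statement's English description precedes it below -/
import Mathlib

section
/- Let L be an integrable real random variable with distribution function F, and let q_α = inf{t ∈ ℝ : F(t) ≥ α} be the α-quantile for α ∈ (0,1). Then the Expected Shortfall ES_α := (1/(1-α)) ∫_α^1 q_u du satisfies the representation ES_α = (1/(1-α)) ( E[L · 1_{L ≥ q_α}] − q_α (P[L ≥ q_α] − (1−α)) ). -/
open MeasureTheory Set Filter ProbabilityTheory
open scoped Topology ENNReal

/-- Lower `α`-quantile (Value-at-Risk) of a random variable `L`. -/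
noncomputable def VaR {Ω : Type*} [MeasurableSpace Ω] (μ : Measure Ω)
    (L : Ω → ℝ) (α : ℝ) : ℝ :=
  sInf {t : ℝ | α ≤ (μ {ω | L ω ≤ t}).toReal}

/-- Expected Shortfall at level `α`: average of the quantile function over `[α,1]`. -/
noncomputable def ES {Ω : Type*} [MeasurableSpace Ω] (μ : Measure Ω)
    (L : Ω → ℝ) (α : ℝ) : ℝ :=
  (1 - α)⁻¹ * ∫ u in α..1, VaR μ L u

section Aux
variable {Ω : Type*} [MeasurableSpace Ω] (μ : Measure Ω) [IsProbabilityMeasure μ]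
  {L : Ω → ℝ}

lemma F_eq_cdf (hLm : Measurable L) (t : ℝ) :
    (μ {ω | L ω ≤ t}).toReal = cdf (μ.map L) t := by
  have : IsProbabilityMeasure (μ.map L) := Measure.isProbabilityMeasure_map hLm.aemeasurable
  rw [cdf_eq_real, measureReal_def, Measure.map_apply hLm measurableSet_Iic]
  rfl

lemma var_le_iff (hLm : Measurable L) {u : ℝ} (hu0 : 0 < u) (hu1 : u < 1) (t : ℝ) :
    VaR μ L u ≤ t ↔ u ≤ (μ {ω | L ω ≤ t}).toReal := by
  have : IsProbabilityMeasure (μ.map L) := Measure.isProbabilityMeasure_map hLm.aemeasurable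
  set F := cdf (μ.map L) with hF
  have hFeq : ∀ s, (μ {ω | L ω ≤ s}).toReal = F s := F_eq_cdf μ hLm
  have hS : {s : ℝ | u ≤ (μ {ω | L ω ≤ s}).toReal} = {s : ℝ | u ≤ F s} := by
    ext s; simp [hFeq]
  have hne : ∃ s, u ≤ F s := by
    have := ((tendsto_cdf_atTop (μ.map L)).eventually (eventually_gt_nhds hu1)).exists
    exact ⟨this.choose, this.choose_spec.le⟩
  have hbdd : BddBelow {s : ℝ | u ≤ F s} := by
    obtain ⟨t₀, ht₀⟩ := eventually_atBot.mp
      ((tendsto_cdf_atBot (μ.map L)).eventually (eventually_lt_nhds hu0))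
    exact ⟨t₀, fun s hs => le_of_not_gt fun h => absurd hs (not_le.mpr (ht₀ s h.le))⟩
  have hmem : u ≤ F (sInf {s : ℝ | u ≤ F s}) := by
    set x := sInf {s : ℝ | u ≤ F s} with hx
    have hub : ∀ t, x < t → u ≤ F t := by
      intro t ht
      obtain ⟨s, hs, hst⟩ := (csInf_lt_iff hbdd hne).mp ht
      exact le_trans hs ((cdf (μ.map L)).mono hst.le)
    have hrc : Tendsto F (𝓝[>] x) (𝓝 (F x)) :=
      ((cdf (μ.map L)).right_continuous x).tendsto.mono_left
        (nhdsWithin_mono x Ioi_subset_Ici_self)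
    exact ge_of_tendsto hrc (eventually_nhdsWithin_of_forall fun t ht => hub t ht)
  constructor
  · intro h
    calc u ≤ F (sInf {s : ℝ | u ≤ F s}) := hmem
    _ ≤ F t := (cdf (μ.map L)).mono (by rw [VaR, hS] at h; exact h)
    _ = (μ {ω | L ω ≤ t}).toReal := (hFeq t).symm
  · intro h
    rw [VaR, hS]
    exact csInf_le hbdd (by simpa [hFeq] using h)

lemma var_mem (hLm : Measurable L) {u : ℝ} (hu0 : 0 < u) (hu1 : u < 1) :
    u ≤ (μ {ω | L ω ≤ VaR μ L u}).toReal :=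
  (var_le_iff μ hLm hu0 hu1 _).mp le_rfl

lemma var_mono (hLm : Measurable L) {u v : ℝ} (hu0 : 0 < u) (huv : u ≤ v) (hv1 : v < 1) :
    VaR μ L u ≤ VaR μ L v :=
  (var_le_iff μ hLm hu0 (lt_of_le_of_lt huv hv1) _).mpr
    (le_trans huv (var_mem μ hLm (lt_of_lt_of_le hu0 huv) hv1))

lemma aux_main (hLm : Measurable L) (hL : Integrable L μ) {α : ℝ}
    (hα : α ∈ Set.Ioo (0 : ℝ) 1) :
    ∫ u in α..1, VaR μ L u =
      (∫ ω in {ω | VaR μ L α ≤ L ω}, L ω ∂μ) -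
        VaR μ L α * ((μ {ω | VaR μ L α ≤ L ω}).toReal - (1 - α)) := by
  obtain ⟨hα0, hα1⟩ := hα
  set q := VaR μ L α with hq
  set F : ℝ → ℝ := fun t => (μ {ω | L ω ≤ t}).toReal with hFdef
  have hFmono : Monotone F := by
    intro s t hst
    exact ENNReal.toReal_le_toReal (measure_ne_top μ _) (measure_ne_top μ _) |>.mpr
      (measure_mono fun ω (h : L ω ≤ s) => le_trans h hst)
  have hFq : α ≤ F q := var_mem μ hLm hα0 hα1
  -- the common lintegral
  set I : ℝ≥0∞ := ∫⁻ t in Ioi (0:ℝ), μ {ω | q + t < L ω} with hI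
  have hA : MeasurableSet {ω | q ≤ L ω} := measurableSet_le measurable_const hLm
  -- Step B : ∫⁻ ofReal (max (L - q) 0) = I
  have stepB : ∫⁻ ω, ENNReal.ofReal (max (L ω - q) 0) ∂μ = I := by
    rw [lintegral_eq_lintegral_meas_lt (f := fun ω => max (L ω - q) 0) μ
      (Eventually.of_forall fun ω => le_max_right _ _)
      (((hLm.sub measurable_const).max measurable_const).aemeasurable)]
    refine setLIntegral_congr_fun_ae measurableSet_Ioi (Eventually.of_forall fun t ht => ?_)
    congr 1
    ext ω
    simp only [mem_setOf_eq, lt_max_iff]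
    constructor
    · rintro (h | h)
      · linarith
      · exact absurd h (not_lt.mpr (le_of_lt ht))
    · intro h; left; linarith
  -- Step C : I ≠ ⊤
  have hmaxint : Integrable (fun ω => max (L ω - q) 0) μ :=
    (hL.sub (integrable_const q)).pos_part
  have stepC : I ≠ ⊤ := by
    rw [← stepB]
    exact (hasFiniteIntegral_iff_ofReal
      (Eventually.of_forall fun ω => le_max_right _ _)).mp hmaxint.2 |>.ne
  -- Step A : lintegral of VaR - q over Ioo α 1 equals I
  have hVmono : MonotoneOn (fun u => VaR μ L u - q) (Ioo α 1) := by
    intro u hu v hv huv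
    have := var_mono μ hLm (lt_trans hα0 hu.1) huv hv.2
    simpa using this
  have hVam : AEMeasurable (fun u => VaR μ L u - q) (volume.restrict (Ioo α 1)) :=
    aemeasurable_restrict_of_monotoneOn measurableSet_Ioo hVmono
  have hVnn : 0 ≤ᵐ[volume.restrict (Ioo α 1)] fun u => VaR μ L u - q := by
    refine (ae_restrict_iff' measurableSet_Ioo).mpr (Eventually.of_forall fun u hu => ?_)
    have : q ≤ VaR μ L u :=
      var_mono μ hLm hα0 hu.1.le hu.2
    simp only [Pi.zero_apply]
    linarith
  have stepA : ∫⁻ u in Ioo α 1, ENNReal.ofReal (VaR μ L u - q) = I := by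
    rw [lintegral_eq_lintegral_meas_lt _ hVnn hVam]
    refine setLIntegral_congr_fun_ae measurableSet_Ioi (Eventually.of_forall fun t ht => ?_)
    have ht : (0:ℝ) < t := ht
    rw [Measure.restrict_apply' measurableSet_Ioo]
    have hset : {u : ℝ | t < VaR μ L u - q} ∩ Ioo α 1 = Ioo (F (q + t)) 1 := by
      ext u
      simp only [mem_inter_iff, mem_setOf_eq, mem_Ioo]
      constructor
      · rintro ⟨h1, h2, h3⟩
        refine ⟨?_, h3⟩
        by_contra hcon
        have : VaR μ L u ≤ q + t :=
          (var_le_iff μ hLm (lt_trans hα0 h2) h3 _).mpr (not_lt.mp hcon)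
        linarith
      · rintro ⟨h1, h2⟩
        have hqt : α < u := lt_of_le_of_lt (le_trans hFq (hFmono (by linarith))) h1
        refine ⟨?_, hqt, h2⟩
        have : ¬ VaR μ L u ≤ q + t := fun hcon =>
          absurd ((var_le_iff μ hLm (lt_trans hα0 hqt) h2 _).mp hcon) (not_le.mpr h1)
        linarith [not_le.mp this]
    rw [hset, Real.volume_Ioo]
    have hle1 : μ {ω | L ω ≤ q + t} ≤ 1 := prob_le_one
    have hnt : μ {ω | L ω ≤ q + t} ≠ ⊤ := measure_ne_top μ _
    have hcompl : {ω | q + t < L ω} = {ω | L ω ≤ q + t}ᶜ := by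
      ext ω; simp [not_le]
    rw [hcompl, measure_compl (measurableSet_le hLm measurable_const) hnt, measure_univ]
    have : ENNReal.ofReal (1 - F (q + t)) =
        ENNReal.ofReal 1 - ENNReal.ofReal (F (q + t)) :=
      ENNReal.ofReal_sub _ ENNReal.toReal_nonneg
    rw [this, ENNReal.ofReal_one, hFdef]
    congr 1
    exact ENNReal.ofReal_toReal hnt
  -- integrability on Ioo α 1
  have hVint : IntegrableOn (fun u => VaR μ L u - q) (Ioo α 1) := by
    refine ⟨hVam.aestronglyMeasurable, ?_⟩
    rw [hasFiniteIntegral_iff_ofReal hVnn]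
    exact stepA ▸ stepC.lt_top
  have hvol : (volume (Ioo α 1)).toReal = 1 - α := by
    rw [Real.volume_Ioo, ENNReal.toReal_ofReal (by linarith)]
  have hIooEq : ∫ u in Ioo α 1, (VaR μ L u - q) = I.toReal := by
    rw [integral_eq_lintegral_of_nonneg_ae hVnn hVam.aestronglyMeasurable, stepA]
  have hIooVaR : ∫ u in Ioo α 1, VaR μ L u = q * (1 - α) + I.toReal := by
    have h2 : ∫ u in Ioo α 1, ((VaR μ L u - q) + q) = q * (1 - α) + I.toReal := by
      rw [integral_add hVint (integrableOn_const
        ((by rw [Real.volume_Ioo]; exact ENNReal.ofReal_lt_top) : volume (Ioo α 1) < ⊤).ne),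
        hIooEq, setIntegral_const, measureReal_def, hvol, smul_eq_mul]
      ring
    simpa using h2
  have hindic : (fun ω => max (L ω - q) 0) = {ω | q ≤ L ω}.indicator (fun ω => L ω - q) := by
    funext ω
    by_cases h : q ≤ L ω
    · simp only [Set.indicator_of_mem (by exact h : ω ∈ {ω | q ≤ L ω})]
      exact max_eq_left (by linarith)
    · simp only [Set.indicator_of_notMem (by exact h : ω ∉ {ω | q ≤ L ω})]
      exact max_eq_right (by linarith [not_le.mp h])
  have hsub : Integrable (fun ω => L ω - q) μ := hL.sub (integrable_const q)
  have hsetint : ∫ ω in {ω | q ≤ L ω}, (L ω - q) ∂μ = I.toReal := by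
    rw [← integral_indicator hA, ← hindic]
    show ∫ ω, max (L ω - q) 0 ∂μ = I.toReal
    rw [integral_eq_lintegral_of_nonneg_ae (f := fun ω => max (L ω - q) 0)
        (Eventually.of_forall fun ω => le_max_right _ _)
        hmaxint.aestronglyMeasurable, stepB]
  have hsetL : ∫ ω in {ω | q ≤ L ω}, L ω ∂μ
      = I.toReal + q * (μ {ω | q ≤ L ω}).toReal := by
    have h2 : ∫ ω in {ω | q ≤ L ω}, ((L ω - q) + q) ∂μ
        = I.toReal + q * (μ {ω | q ≤ L ω}).toReal := by
      rw [integral_add (hsub.integrableOn)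
        (integrableOn_const (measure_lt_top μ _).ne),
        hsetint, setIntegral_const, measureReal_def, smul_eq_mul]
      ring
    simpa using h2
  rw [intervalIntegral.integral_of_le hα1.le, integral_Ioc_eq_integral_Ioo, hIooVaR, hsetL]
  ring

end Aux

/-- Acerbi's representation of Expected Shortfall:
`ES_α = (1/(1-α)) (E[L 1_{L ≥ q_α}] - q_α (P[L ≥ q_α] - (1-α)))`. -/
theorem es_representation {Ω : Type*} [MeasurableSpace Ω] (μ : Measure Ω)
    [IsProbabilityMeasure μ] (L : Ω → ℝ) (hL : Integrable L μ)
    (α : ℝ) (hα : α ∈ Set.Ioo (0 : ℝ) 1) :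
    ES μ L α =
      (1 - α)⁻¹ *
        ((∫ ω in {ω | VaR μ L α ≤ L ω}, L ω ∂μ) -
          VaR μ L α * ((μ {ω | VaR μ L α ≤ L ω}).toReal - (1 - α))) := by
  obtain ⟨hα0, hα1⟩ := hα
  obtain ⟨L', hL'sm, hLL'⟩ := hL.1
  have hL'm : Measurable L' := hL'sm.measurable
  have hL' : Integrable L' μ := hL.congr hLL'
  have hsets : ∀ t : ℝ, μ {ω | L ω ≤ t} = μ {ω | L' ω ≤ t} := fun t =>
    measure_congr (hLL'.mono fun ω h => by change (L ω ≤ t) = (L' ω ≤ t); rw [h])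
  have hVaR : VaR μ L = VaR μ L' := by
    funext u
    unfold VaR
    congr 1
    ext t
    simp only [Set.mem_setOf_eq, hsets t]
  have hAeq : {ω | VaR μ L' α ≤ L ω} =ᵐ[μ] {ω | VaR μ L' α ≤ L' ω} :=
    hLL'.mono fun ω h => by
    change (VaR μ L' α ≤ L ω) = (VaR μ L' α ≤ L' ω); rw [h]
  have hIA : ∫ ω in {ω | VaR μ L' α ≤ L ω}, L ω ∂μ
      = ∫ ω in {ω | VaR μ L' α ≤ L' ω}, L' ω ∂μ := by
    rw [Measure.restrict_congr_set hAeq]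
    exact integral_congr_ae (ae_restrict_of_ae hLL')
  unfold ES
  rw [hVaR, aux_main μ hL'm hL' ⟨hα0, hα1⟩, measure_congr hAeq, hIA]
end

section
/- Let x ↦ ϱ(x) be a differentiable positively homogeneous (degree 1) risk measure of the portfolio loss L(x) = Σᵢ xᵢLᵢ, let H(x) = L(x) − ϱ(x), and suppose that for some fixed t ∈ ℝ and all i, ∂ϱ(x)/∂xᵢ = E[Lᵢ | H(x) = t] − (1/f_{H(x)}(t)) ∂F̄_{H(x)}(t)/∂xᵢ, where f_{H(x)} is the density of H(x) and F̄_{H(x)}(t) = P[H(x) > t] > 0 with f_{H(x)}(t) > 0. Then Σ_{i=1}^d xᵢ ∂F̄_{H(x)}(t)/∂xᵢ = t · f_{H(x)}(t). -/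
open Finset

theorem euler_aux {d : ℕ} (ϱ : (Fin d → ℝ) → ℝ) (x : Fin d → ℝ)
    (hdiff : Differentiable ℝ ϱ)
    (hhom : ∀ c : ℝ, 0 < c → ∀ y : Fin d → ℝ, ϱ (c • y) = c * ϱ y) :
    fderiv ℝ ϱ x x = ϱ x := by
  have h1 : HasDerivAt (fun c : ℝ => ϱ (c • x)) (fderiv ℝ ϱ x x) 1 := by
    have hs : HasDerivAt (fun c : ℝ => c • x) x 1 := by
      simpa using (hasDerivAt_id (1 : ℝ)).smul_const x
    have hfd : HasFDerivAt ϱ (fderiv ℝ ϱ x) ((1:ℝ) • x) := by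
      rw [one_smul]; exact (hdiff x).hasFDerivAt
    have := hfd.comp_hasDerivAt 1 hs
    exact this
  have h2 : HasDerivAt (fun c : ℝ => ϱ (c • x)) (ϱ x) 1 := by
    have h3 : HasDerivAt (fun c : ℝ => c * ϱ x) (ϱ x) 1 := by
      simpa using (hasDerivAt_id (1 : ℝ)).mul_const (ϱ x)
    apply h3.congr_of_eventuallyEq
    filter_upwards [eventually_gt_nhds (show (0:ℝ) < 1 by norm_num)] with c hc
    exact hhom c hc x
  exact h1.unique h2

/-- For a differentiable positively homogeneous risk measure `ϱ` whose partial
derivatives satisfy `∂ᵢϱ(x) = E[Lᵢ | H(x) = t] - (1/f_{H(x)}(t)) ∂ᵢ F̄_{H(x)}(t)`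
(here `cond i` denotes `E[Lᵢ | H(x) = t]`, `gF i` denotes `∂ᵢ F̄_{H(x)}(t)` and
`fH = f_{H(x)}(t) > 0`), and `∑ i, xᵢ E[Lᵢ|H(x)=t] = E[L(x)|H(x)=t] = ϱ(x) + t`,
one has `∑ i, xᵢ ∂ᵢ F̄_{H(x)}(t) = t f_{H(x)}(t)`. -/
theorem tail_gradient_identity {d : ℕ} (ϱ : (Fin d → ℝ) → ℝ)
    (x : Fin d → ℝ) (t fH : ℝ) (cond gF : Fin d → ℝ)
    (hdiff : Differentiable ℝ ϱ)
    (hhom : ∀ c : ℝ, 0 < c → ∀ y : Fin d → ℝ, ϱ (c • y) = c * ϱ y)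
    (hfH : 0 < fH)
    (hsum : ∑ i : Fin d, x i * cond i = ϱ x + t)
    (hder : ∀ i : Fin d,
      fderiv ℝ ϱ x (Pi.single i 1) = cond i - (1 / fH) * gF i) :
    ∑ i : Fin d, x i * gF i = t * fH := by
  have hx : x = ∑ i : Fin d, x i • (Pi.single i 1 : Fin d → ℝ) := by
    funext j
    simp [Finset.sum_apply, Pi.single_apply, mul_comm]
  have heuler : ∑ i : Fin d, x i * fderiv ℝ ϱ x (Pi.single i 1) = ϱ x := by
    calc ∑ i : Fin d, x i * fderiv ℝ ϱ x (Pi.single i 1)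
        = fderiv ℝ ϱ x (∑ i : Fin d, x i • (Pi.single i 1 : Fin d → ℝ)) := by
          simp [map_sum]
      _ = fderiv ℝ ϱ x x := by rw [← hx]
      _ = ϱ x := euler_aux ϱ x hdiff hhom
  rw [Finset.sum_congr rfl (fun i _ => by rw [hder i])] at heuler
  have hexp : ∑ i : Fin d, x i * (cond i - 1 / fH * gF i)
      = (∑ i : Fin d, x i * cond i) - (1 / fH) * ∑ i : Fin d, x i * gF i := by
    rw [Finset.mul_sum, ← Finset.sum_sub_distrib]
    congr 1; funext i; ring
  rw [hexp, hsum] at heuler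
  have : (1 / fH) * ∑ i : Fin d, x i * gF i = t := by linarith
  field_simp at this
  linarith
end
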